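/- arXiv:1901.03504 — 4 statements merged into one kernel-verified Lean document; each statement's English description precedes it below -/
import Mathlib

section
/- Let Ω be a compact metric space and μ a non-atomic (continuous) Borel probability measure on Ω. Let g : Ω → ℝ be a step function (taking finitely many values, each on a Borel set) with ∫ g dμ = 0, and let δ > 0. Then there exists a continuous function f : Ω → ℝ with ∫ f dμ = 0, ‖f‖∞ ≤ 2‖g‖∞, and μ({x : f(x) ≠ g(x)}) ≤ δ. -/
/-!
Inner regularity gives, inside each level set of `g`, a closed set of almost full measure. On the
union of these finitely many disjoint closed sets `g` is continuous, so Tietze's theorem extends it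
to a continuous `f₀` with the same bound `M = sup |g|` that differs from `g` only on a set of small
measure; in particular `|∫ f₀| ≤ 2M μ{f₀ ≠ g}` is small. Since `μ` has no atoms, a point of its
support carries a bump `h` with values in `[0, 1]`, positive integral and support of small measure.
Having chosen `μ{f₀ ≠ g} ≤ ∫ h / 2`, the multiple of `h` that removes the mean of `f₀` has
coefficient at most `M`, which gives the bound `2M`.
-/

open MeasureTheory Set Filter Topology Metric
open scoped ENNReal

theorem Measurable.exists_isClosed_continuousOn_measure_compl_le
    {X Y : Type*} [TopologicalSpace X] [MeasurableSpace X] [OpensMeasurableSpace X]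
    [TopologicalSpace Y] [MeasurableSpace Y] [MeasurableSingletonClass Y]
    {μ : Measure X} [IsFiniteMeasure μ] [μ.WeaklyRegular] {g : X → Y}
    (hg : Measurable g) (hrange : (range g).Finite) {ε : ℝ≥0∞} (hε : ε ≠ 0) :
    ∃ K, IsClosed K ∧ ContinuousOn g K ∧ μ Kᶜ ≤ ε := by
  have := hrange.fintype
  set n := Fintype.card (range g)
  have hεn : ε / n ≠ 0 := ENNReal.div_ne_zero.2 ⟨hε, ENNReal.natCast_ne_top n⟩
  choose F hF_sub hF_closed hF_lt using fun c : range g =>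
    (hg (measurableSet_singleton c.1)).exists_isClosed_sdiff_lt (measure_ne_top μ _) hεn
  refine ⟨⋃ c, F c, isClosed_iUnion_of_finite hF_closed, ?_, ?_⟩
  · exact (locallyFinite_of_finite F).continuousOn_iUnion hF_closed fun c =>
      continuousOn_const.congr fun x hx => hF_sub c hx
  · have hcover : (⋃ c, F c)ᶜ ⊆ ⋃ c : range g, g ⁻¹' {c.1} \ F c := fun x hx =>
      mem_iUnion.2 ⟨⟨g x, x, rfl⟩, rfl, fun h => hx (mem_iUnion.2 ⟨_, h⟩)⟩
    calc μ (⋃ c, F c)ᶜ ≤ ∑ c, μ (g ⁻¹' {c.1} \ F c) :=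
          (measure_mono hcover).trans (measure_iUnion_fintype_le _ _)
      _ ≤ ∑ _c : range g, ε / n := Finset.sum_le_sum fun c _ => (hF_lt c).le
      _ ≤ ε := by
        rw [Finset.sum_const, Finset.card_univ, nsmul_eq_mul]
        exact ENNReal.mul_div_le

theorem Measurable.exists_continuous_abs_le_measure_ne_le
    {X : Type*} [TopologicalSpace X] [NormalSpace X] [MeasurableSpace X] [OpensMeasurableSpace X]
    {μ : Measure X} [IsFiniteMeasure μ] [μ.WeaklyRegular] {g : X → ℝ}
    (hg : Measurable g) (hrange : (range g).Finite) {M : ℝ} (hgM : ∀ x, |g x| ≤ M)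
    {ε : ℝ≥0∞} (hε : ε ≠ 0) :
    ∃ f : C(X, ℝ), (∀ x, |f x| ≤ M) ∧ μ {x | f x ≠ g x} ≤ ε := by
  rcases isEmpty_or_nonempty X with hX | ⟨⟨x₀⟩⟩
  · exact ⟨0, isEmptyElim, by simp [Set.eq_empty_of_isEmpty]⟩
  obtain ⟨K, hK_closed, hgK, hKε⟩ :=
    hg.exists_isClosed_continuousOn_measure_compl_le (μ := μ) hrange hε
  obtain ⟨f, hfM, hfK⟩ := ContinuousMap.exists_restrict_eq_forall_mem_of_closed
    ⟨K.domRestrict g, hgK.domRestrict⟩ (t := Icc (-M) M) (fun x => abs_le.1 (hgM x))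
    ⟨g x₀, abs_le.1 (hgM x₀)⟩ hK_closed
  have hfg : {x | f x ≠ g x} ⊆ Kᶜ := fun x hx hxK => hx (DFunLike.congr_fun hfK ⟨x, hxK⟩)
  exact ⟨f, fun x => abs_le.2 (hfM x), (measure_mono hfg).trans hKε⟩

theorem abs_integral_sub_integral_le {X : Type*} [MeasurableSpace X] {μ : Measure X}
    [IsFiniteMeasure μ] {f g : X → ℝ} {M : ℝ} (hf : Integrable f μ) (hg : Integrable g μ)
    (hfM : ∀ x, |f x| ≤ M) (hgM : ∀ x, |g x| ≤ M) :
    |∫ x, f x ∂μ - ∫ x, g x ∂μ| ≤ 2 * M * μ.real {x | f x ≠ g x} := by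
  rw [← integral_sub hf hg, ← setIntegral_eq_integral_of_forall_compl_eq_zero
    (s := {x | f x ≠ g x}) fun x hx => sub_eq_zero.2 (not_not.1 hx)]
  refine norm_setIntegral_le_of_norm_le_const (f := fun x => f x - g x) (measure_lt_top μ _)
    fun x _ => ?_
  calc ‖f x - g x‖ ≤ |f x| + |g x| := abs_sub _ _
    _ ≤ 2 * M := by linarith [hfM x, hgM x]

theorem exists_continuous_integral_pos_measure_support_le {X : Type*} [MetricSpace X]
    [HereditarilyLindelofSpace X] [MeasurableSpace X] [OpensMeasurableSpace X]
    (μ : Measure X) [IsFiniteMeasure μ] [NeZero μ] (hμ : ∀ x, μ {x} = 0)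
    {ε : ℝ≥0∞} (hε : ε ≠ 0) :
    ∃ h : C(X, ℝ), (∀ x, h x ∈ Icc 0 1) ∧ 0 < ∫ x, h x ∂μ ∧ μ (Function.support h) ≤ ε := by
  obtain ⟨x₀, hx₀⟩ := μ.nonempty_support (NeZero.ne μ)
  have hball : Tendsto (fun r => μ (ball x₀ r)) (𝓝[>] 0) (𝓝 0) := by
    simpa [hμ x₀] using tendsto_measure_thickening_of_isClosed (μ := μ) (s := {x₀})
      ⟨1, one_pos, measure_ne_top μ _⟩ isClosed_singleton
  obtain ⟨r, hrε, hr⟩ :=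
    ((hball.eventually (gt_mem_nhds (pos_iff_ne_zero.2 hε))).and self_mem_nhdsWithin).exists
  let h : C(X, ℝ) := ⟨fun x => max 0 (1 - dist x x₀ / r), by fun_prop⟩
  have h01 : ∀ x, h x ∈ Icc 0 1 := fun x =>
    ⟨le_max_left _ _, max_le zero_le_one (by simp only [sub_le_self_iff]; positivity)⟩
  have hsupp : Function.support h = ball x₀ r := by
    ext x
    simp [h, mem_ball, div_lt_one (show (0:ℝ) < r from hr)]
  refine ⟨h, h01, ?_, hsupp ▸ hrε.le⟩
  rw [integral_pos_iff_support_of_nonneg (fun x => (h01 x).1)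
    ((integrable_const (1 : ℝ)).mono' h.continuous.aestronglyMeasurable
      (Eventually.of_forall fun x => by simpa [abs_of_nonneg (h01 x).1] using (h01 x).2)), hsupp]
  exact (μ.mem_support_iff_forall x₀).1 hx₀ _ (ball_mem_nhds x₀ hr)

theorem ContinuousMap.integrable_of_compactSpace {X E : Type*} [TopologicalSpace X]
    [CompactSpace X] [MeasurableSpace X] [OpensMeasurableSpace X] [NormedAddCommGroup E]
    {μ : Measure X} [IsFiniteMeasure μ] (f : C(X, E)) : Integrable f μ :=
  f.continuous.integrable_of_hasCompactSupport (HasCompactSupport.of_compactSpace _)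

theorem exists_integral_eq_zero_of_abs_integral_le {X : Type*} [TopologicalSpace X]
    [CompactSpace X] [MeasurableSpace X] [OpensMeasurableSpace X] {μ : Measure X}
    [IsFiniteMeasure μ] {f₀ h : C(X, ℝ)} {M : ℝ} (hf₀M : ∀ x, |f₀ x| ≤ M)
    (h01 : ∀ x, h x ∈ Icc 0 1) (hh : 0 < ∫ x, h x ∂μ) (hf₀ : |∫ x, f₀ x ∂μ| ≤ M * ∫ x, h x ∂μ) :
    ∃ f : C(X, ℝ), ∫ x, f x ∂μ = 0 ∧ (∀ x, |f x| ≤ 2 * M) ∧ ∀ x, h x = 0 → f x = f₀ x := by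
  set t := -(∫ x, f₀ x ∂μ) / ∫ x, h x ∂μ
  have ht : |t| ≤ M := by rw [abs_div, abs_neg, abs_of_pos hh, div_le_iff₀ hh]; exact hf₀
  refine ⟨f₀ + t • h, ?_, fun x => ?_, fun x hx => by simp [hx]⟩
  · simp only [ContinuousMap.add_apply, ContinuousMap.smul_apply, smul_eq_mul]
    rw [integral_add f₀.integrable_of_compactSpace (h.integrable_of_compactSpace.const_mul t),
      integral_const_mul]
    simp only [t, div_mul_cancel₀ _ hh.ne', add_neg_cancel]
  · calc |f₀ x + t * h x| ≤ |f₀ x| + |t| * |h x| := (abs_add_le _ _).trans_eq (by rw [abs_mul])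
      _ ≤ M + M * 1 := add_le_add (hf₀M x) (mul_le_mul ht
          (abs_le.2 ⟨by linarith [(h01 x).1], (h01 x).2⟩) (abs_nonneg _)
          ((abs_nonneg _).trans (hf₀M x)))
      _ = 2 * M := by ring

theorem stmt0 {Ω : Type*} [MetricSpace Ω] [CompactSpace Ω] [MeasurableSpace Ω] [BorelSpace Ω]
    (μ : Measure Ω) [IsProbabilityMeasure μ] (hcont : ∀ x : Ω, μ {x} = 0)
    (g : Ω → ℝ) (hrange : (Set.range g).Finite) (hmeas : Measurable g)
    (hmean : ∫ x, g x ∂μ = 0) (δ : ℝ) (hδ : 0 < δ) :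
    ∃ f : C(Ω, ℝ), (∫ x, f x ∂μ = 0) ∧ ‖f‖ ≤ 2 * (⨆ x, |g x|) ∧
      μ {x | f x ≠ g x} ≤ ENNReal.ofReal δ := by
  set M := ⨆ x, |g x|
  have hgM : ∀ x, |g x| ≤ M :=
    le_ciSup (BddAbove.mono (range_comp abs g).subset (hrange.image abs).bddAbove)
  have hM : 0 ≤ M := Real.iSup_nonneg fun x => abs_nonneg _
  obtain ⟨h, h01, hh, hh_supp⟩ := exists_continuous_integral_pos_measure_support_le μ hcont
    (ε := ENNReal.ofReal (δ / 2)) (by simpa using half_pos hδ)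
  obtain ⟨f₀, hf₀M, hf₀g⟩ := hmeas.exists_continuous_abs_le_measure_ne_le (μ := μ) hrange hgM
    (ε := ENNReal.ofReal (min (δ / 2) ((∫ x, h x ∂μ) / 2))) (by simp [hδ, hh])
  have hf₀ : |∫ x, f₀ x ∂μ| ≤ M * ∫ x, h x ∂μ :=
    calc |∫ x, f₀ x ∂μ| = |∫ x, f₀ x ∂μ - ∫ x, g x ∂μ| := by rw [hmean, sub_zero]
      _ ≤ 2 * M * μ.real {x | f₀ x ≠ g x} := abs_integral_sub_integral_le
          f₀.integrable_of_compactSpace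
          ((integrable_const M).mono' hmeas.aestronglyMeasurable (Eventually.of_forall hgM))
          hf₀M hgM
      _ ≤ 2 * M * ((∫ x, h x ∂μ) / 2) := by
          gcongr
          exact ENNReal.toReal_le_of_le_ofReal (by positivity) (hf₀g.trans
            (ENNReal.ofReal_le_ofReal (min_le_right _ _)))
      _ = M * ∫ x, h x ∂μ := by ring
  obtain ⟨f, hf_int, hfM, hf_eq⟩ := exists_integral_eq_zero_of_abs_integral_le hf₀M h01 hh hf₀
  have hsub : {x | f x ≠ g x} ⊆ {x | f₀ x ≠ g x} ∪ Function.support h := fun x hx => by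
    by_cases hx0 : h x = 0
    · exact Or.inl fun hf₀x => hx ((hf_eq x hx0).trans hf₀x)
    · exact Or.inr hx0
  refine ⟨f, hf_int, (ContinuousMap.norm_le f (by positivity)).2 hfM, ?_⟩
  calc μ {x | f x ≠ g x} ≤ μ {x | f₀ x ≠ g x} + μ (Function.support h) :=
        (measure_mono hsub).trans (measure_union_le _ _)
    _ ≤ ENNReal.ofReal (δ / 2) + ENNReal.ofReal (δ / 2) :=
        add_le_add (hf₀g.trans (ENNReal.ofReal_le_ofReal (min_le_left _ _))) hh_supp
    _ = ENNReal.ofReal δ := by rw [← ENNReal.ofReal_add (by positivity) (by positivity), add_halves]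
end

section
/- Let X₁, …, X_N be orthonormal real random variables on a probability space and c₁, …, c_N real numbers. Then E[ max_{1 ≤ n ≤ N} (∑_{j=1}^n c_j X_j)² ] ≤ (log₂(4N))² · ∑_{n=1}^N c_n². -/
/-!
For `n ≤ N < 2 ^ K`, the binary expansion of `n` splits `(0, n]` into at most one dyadic block
`(m 2 ^ k, (m + 1) 2 ^ k]` per level `k < K`. By Cauchy–Schwarz the square of every partial sum is
then at most `K` times the sum of the squared block sums over all dyadic blocks inside `[1, N]`, a
bound that no longer depends on `n`. By orthonormality the expectation of a squared block sum is
the sum of the `c j ^ 2` over the block, and the blocks of one level are disjoint, so the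
expectation of the bound is at most `K ^ 2 ∑ c j ^ 2`. Take `K = ⌊log₂ N⌋ + 1 ≤ log₂ (4 N)`.
-/

open MeasureTheory Finset

def dyadicBlock (k m : ℕ) : Finset ℕ := Ioc (m * 2 ^ k) ((m + 1) * 2 ^ k)

lemma dyadicBlock_subset_Icc {N k m : ℕ} (hm : m < N / 2 ^ k) : dyadicBlock k m ⊆ Icc 1 N := by
  intro j hj
  have h1 := Nat.div_mul_le_self N (2 ^ k)
  have h2 : (m + 1) * 2 ^ k ≤ N / 2 ^ k * 2 ^ k := Nat.mul_le_mul_right _ hm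
  simp only [dyadicBlock, mem_Ioc] at hj
  simp only [mem_Icc]
  omega

lemma sum_range_sum_dyadicBlock {M : Type*} [AddCommMonoid M] (f : ℕ → M) (k t : ℕ) :
    ∑ m ∈ range t, ∑ j ∈ dyadicBlock k m, f j = ∑ j ∈ Ioc 0 (t * 2 ^ k), f j := by
  induction t with
  | zero => simp
  | succ t ih =>
    rw [sum_range_succ, ih]
    exact sum_Ioc_consecutive f (Nat.zero_le _) (Nat.mul_le_mul_right _ t.le_succ)

lemma sum_range_sum_dyadicBlock_le_sum_Icc {f : ℕ → ℝ} (hf : ∀ j, 0 ≤ f j) (N k : ℕ) :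
    ∑ m ∈ range (N / 2 ^ k), ∑ j ∈ dyadicBlock k m, f j ≤ ∑ j ∈ Icc 1 N, f j := by
  rw [sum_range_sum_dyadicBlock]
  refine sum_le_sum_of_subset_of_nonneg (fun j hj => ?_) fun j _ _ => hf j
  have := Nat.div_mul_le_self N (2 ^ k)
  simp only [mem_Ioc, mem_Icc] at hj ⊢
  omega

lemma sum_range_sum_Ioc_div_mul {M : Type*} [AddCommMonoid M] (f : ℕ → M) (n K : ℕ) :
    ∑ k ∈ range K, ∑ j ∈ Ioc (n / 2 ^ (k + 1) * 2 ^ (k + 1)) (n / 2 ^ k * 2 ^ k), f j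
      = ∑ j ∈ Ioc (n / 2 ^ K * 2 ^ K) n, f j := by
  induction K with
  | zero => simp
  | succ K ih =>
    have hmono : n / 2 ^ (K + 1) * 2 ^ (K + 1) ≤ n / 2 ^ K * 2 ^ K := by
      rw [pow_succ, ← Nat.div_div_eq_div_mul, mul_comm (2 ^ K) 2, ← mul_assoc]
      exact Nat.mul_le_mul_right _ (Nat.div_mul_le_self _ 2)
    rw [sum_range_succ, ih, add_comm]
    exact sum_Ioc_consecutive f hmono (Nat.div_mul_le_self n _)

lemma sq_sum_Ioc_div_mul_le (f : ℕ → ℝ) (n k : ℕ) :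
    (∑ j ∈ Ioc (n / 2 ^ (k + 1) * 2 ^ (k + 1)) (n / 2 ^ k * 2 ^ k), f j) ^ 2
      ≤ ∑ m ∈ range (n / 2 ^ k), (∑ j ∈ dyadicBlock k m, f j) ^ 2 := by
  set q := n / 2 ^ k
  have hlow : n / 2 ^ (k + 1) * 2 ^ (k + 1) = q / 2 * 2 * 2 ^ k := by
    rw [pow_succ, ← Nat.div_div_eq_div_mul, mul_comm (2 ^ k) 2, ← mul_assoc]
  rw [hlow]
  rcases Nat.mod_two_eq_zero_or_one q with heven | hodd
  · rw [show q / 2 * 2 = q by omega, Ioc_self, sum_empty, sq, mul_zero]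
    exact sum_nonneg fun m _ => sq_nonneg _
  · have hblock : Ioc (q / 2 * 2 * 2 ^ k) (q * 2 ^ k) = dyadicBlock k (q / 2 * 2) := by
      rw [dyadicBlock, show q / 2 * 2 + 1 = q by omega]
    rw [hblock]
    exact single_le_sum (f := fun m => (∑ j ∈ dyadicBlock k m, f j) ^ 2)
      (fun m _ => sq_nonneg _) (mem_range.2 (by omega))

def dyadicSquareFunction (f : ℕ → ℝ) (N K : ℕ) : ℝ :=
  ∑ k ∈ range K, ∑ m ∈ range (N / 2 ^ k), (∑ j ∈ dyadicBlock k m, f j) ^ 2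

lemma sq_sum_Icc_le_dyadicSquareFunction (f : ℕ → ℝ) {n N K : ℕ} (hn : n ≤ N) (hN : N < 2 ^ K) :
    (∑ j ∈ Icc 1 n, f j) ^ 2 ≤ K * dyadicSquareFunction f N K := by
  have hpieces := sum_range_sum_Ioc_div_mul f n K
  rw [Nat.div_eq_of_lt (hn.trans_lt hN), zero_mul] at hpieces
  calc (∑ j ∈ Icc 1 n, f j) ^ 2
      = (∑ k ∈ range K,
          ∑ j ∈ Ioc (n / 2 ^ (k + 1) * 2 ^ (k + 1)) (n / 2 ^ k * 2 ^ k), f j) ^ 2 := by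
        rw [hpieces, ← Icc_add_one_left_eq_Ioc, zero_add]
    _ ≤ #(range K) * ∑ k ∈ range K,
          (∑ j ∈ Ioc (n / 2 ^ (k + 1) * 2 ^ (k + 1)) (n / 2 ^ k * 2 ^ k), f j) ^ 2 :=
        sq_sum_le_card_mul_sum_sq
    _ ≤ K * dyadicSquareFunction f N K := by
        rw [card_range, dyadicSquareFunction]
        gcongr with k
        refine (sq_sum_Ioc_div_mul_le f n k).trans ?_
        exact sum_le_sum_of_subset_of_nonneg (range_subset_range.2 (Nat.div_le_div_right hn))
          fun m _ _ => sq_nonneg _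

section Orthonormal

variable {Ω : Type*} [MeasurableSpace Ω] {P : Measure Ω} {X : ℕ → Ω → ℝ} {s : Finset ℕ}

lemma memLp_two_of_integral_mul_self_ne_zero {Y : Ω → ℝ} (hY : AEStronglyMeasurable Y P)
    (h : ∫ ω, Y ω * Y ω ∂P ≠ 0) : MemLp Y 2 P := by
  rw [memLp_two_iff_integrable_sq hY]
  simp_rw [sq]
  exact Integrable.of_integral_ne_zero h

lemma memLp_two_of_orthonormal (hmeas : ∀ i, AEStronglyMeasurable (X i) P)
    (horth : ∀ i ∈ s, ∀ j ∈ s, ∫ ω, X i ω * X j ω ∂P = if i = j then 1 else 0)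
    {i : ℕ} (hi : i ∈ s) : MemLp (X i) 2 P :=
  memLp_two_of_integral_mul_self_ne_zero (hmeas i) (by simp [horth i hi i hi])

lemma integrable_sq_sum_of_orthonormal (hmeas : ∀ i, AEStronglyMeasurable (X i) P)
    (horth : ∀ i ∈ s, ∀ j ∈ s, ∫ ω, X i ω * X j ω ∂P = if i = j then 1 else 0)
    (c : ℕ → ℝ) {B : Finset ℕ} (hB : B ⊆ s) :
    Integrable (fun ω => (∑ j ∈ B, c j * X j ω) ^ 2) P := by
  have hsum : MemLp (fun ω => ∑ j ∈ B, c j * X j ω) 2 P :=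
    memLp_finsetSum B fun j hj => (memLp_two_of_orthonormal hmeas horth (hB hj)).const_mul (c j)
  exact hsum.integrable_sq

lemma integral_sq_sum_of_orthonormal (hmeas : ∀ i, AEStronglyMeasurable (X i) P)
    (horth : ∀ i ∈ s, ∀ j ∈ s, ∫ ω, X i ω * X j ω ∂P = if i = j then 1 else 0)
    (c : ℕ → ℝ) {B : Finset ℕ} (hB : B ⊆ s) :
    ∫ ω, (∑ j ∈ B, c j * X j ω) ^ 2 ∂P = ∑ j ∈ B, c j ^ 2 := by
  have hprod : ∀ i ∈ B, ∀ j ∈ B, Integrable (fun ω => c i * c j * (X i ω * X j ω)) P :=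
    fun i hi j hj => ((memLp_two_of_orthonormal hmeas horth (hB hi)).integrable_mul
      (memLp_two_of_orthonormal hmeas horth (hB hj))).const_mul _
  have hexpand : ∀ ω, (∑ j ∈ B, c j * X j ω) ^ 2
      = ∑ i ∈ B, ∑ j ∈ B, c i * c j * (X i ω * X j ω) := fun ω => by
    rw [sq, sum_mul_sum]
    exact sum_congr rfl fun i _ => sum_congr rfl fun j _ => by ring
  simp_rw [hexpand]
  rw [integral_finsetSum _ fun i hi => integrable_finsetSum _ (hprod i hi)]
  refine sum_congr rfl fun i hi => ?_
  rw [integral_finsetSum _ (hprod i hi)]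
  simp_rw [integral_const_mul]
  rw [sum_congr rfl fun j hj => by rw [horth i (hB hi) j (hB hj)]]
  simp [hi, sq]

lemma integrable_dyadicSquareFunction (hmeas : ∀ i, AEStronglyMeasurable (X i) P) {N : ℕ}
    (horth : ∀ i ∈ Icc 1 N, ∀ j ∈ Icc 1 N, ∫ ω, X i ω * X j ω ∂P = if i = j then 1 else 0)
    (c : ℕ → ℝ) (K : ℕ) :
    Integrable (fun ω => dyadicSquareFunction (fun j => c j * X j ω) N K) P :=
  integrable_finsetSum _ fun _ _ => integrable_finsetSum _ fun _ hm =>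
    integrable_sq_sum_of_orthonormal hmeas horth c (dyadicBlock_subset_Icc (mem_range.1 hm))

lemma integral_dyadicSquareFunction_le (hmeas : ∀ i, AEStronglyMeasurable (X i) P) {N : ℕ}
    (horth : ∀ i ∈ Icc 1 N, ∀ j ∈ Icc 1 N, ∫ ω, X i ω * X j ω ∂P = if i = j then 1 else 0)
    (c : ℕ → ℝ) (K : ℕ) :
    ∫ ω, dyadicSquareFunction (fun j => c j * X j ω) N K ∂P ≤ K * ∑ n ∈ Icc 1 N, c n ^ 2 := by
  have hblock : ∀ k, ∀ m ∈ range (N / 2 ^ k),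
      Integrable (fun ω => (∑ j ∈ dyadicBlock k m, c j * X j ω) ^ 2) P := fun _ _ hm =>
    integrable_sq_sum_of_orthonormal hmeas horth c (dyadicBlock_subset_Icc (mem_range.1 hm))
  simp only [dyadicSquareFunction]
  rw [integral_finsetSum _ fun k _ => integrable_finsetSum _ (hblock k)]
  calc ∑ k ∈ range K, ∫ ω, ∑ m ∈ range (N / 2 ^ k), (∑ j ∈ dyadicBlock k m, c j * X j ω) ^ 2 ∂P
      = ∑ k ∈ range K, ∑ m ∈ range (N / 2 ^ k), ∑ j ∈ dyadicBlock k m, c j ^ 2 := by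
        refine sum_congr rfl fun k _ => ?_
        rw [integral_finsetSum _ (hblock k)]
        exact sum_congr rfl fun m hm =>
          integral_sq_sum_of_orthonormal hmeas horth c (dyadicBlock_subset_Icc (mem_range.1 hm))
    _ ≤ ∑ _k ∈ range K, ∑ n ∈ Icc 1 N, c n ^ 2 :=
        sum_le_sum fun k _ => sum_range_sum_dyadicBlock_le_sum_Icc (fun j => sq_nonneg (c j)) N k
    _ = K * ∑ n ∈ Icc 1 N, c n ^ 2 := by rw [sum_const, card_range, nsmul_eq_mul]

end Orthonormal

lemma natLog_two_add_one_le_logb_four_mul {N : ℕ} (hN : N ≠ 0) :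
    (Nat.log 2 N + 1 : ℝ) ≤ Real.logb 2 (4 * N) := by
  have hlogb : Real.logb 2 (4 * N) = Real.logb 2 N + 2 := by
    rw [Real.logb_mul (by norm_num) (by positivity), show (4 : ℝ) = 2 ^ (2 : ℝ) by norm_num,
      Real.logb_rpow (by norm_num) (by norm_num), add_comm]
  have := Real.natLog_le_logb N 2
  push_cast at this
  linarith

theorem stmt5_general {Ω : Type*} [MeasurableSpace Ω] (P : Measure Ω)
    (N : ℕ) (hN : 1 ≤ N) (X : ℕ → Ω → ℝ) (hmeas : ∀ i, Measurable (X i))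
    (horth : ∀ i ∈ Finset.Icc 1 N, ∀ j ∈ Finset.Icc 1 N,
      ∫ ω, X i ω * X j ω ∂P = if i = j then 1 else 0)
    (c : ℕ → ℝ) :
    ∫ ω, (Finset.Icc 1 N).sup' (Finset.nonempty_Icc.2 hN)
        (fun n => (∑ j ∈ Finset.Icc 1 n, c j * X j ω) ^ 2) ∂P
      ≤ (Real.logb 2 (4 * N)) ^ 2 * ∑ n ∈ Finset.Icc 1 N, (c n) ^ 2 := by
  set K := Nat.log 2 N + 1
  have hXae : ∀ i, AEStronglyMeasurable (X i) P := fun i => (hmeas i).aestronglyMeasurable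
  have hNK : N < 2 ^ K := Nat.lt_pow_succ_log_self one_lt_two N
  have hmax : ∀ ω, (Icc 1 N).sup' (nonempty_Icc.2 hN) (fun n => (∑ j ∈ Icc 1 n, c j * X j ω) ^ 2)
      ≤ K * dyadicSquareFunction (fun j => c j * X j ω) N K :=
    fun ω => sup'_le _ _ fun n hn =>
      sq_sum_Icc_le_dyadicSquareFunction _ (mem_Icc.1 hn).2 hNK
  have hmax_nonneg : ∀ ω, 0 ≤ (Icc 1 N).sup' (nonempty_Icc.2 hN)
      (fun n => (∑ j ∈ Icc 1 n, c j * X j ω) ^ 2) :=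
    fun ω => (sq_nonneg _).trans
      (le_sup' (fun n => (∑ j ∈ Icc 1 n, c j * X j ω) ^ 2) (mem_Icc.2 ⟨le_rfl, hN⟩))
  have hK : (K : ℝ) ≤ Real.logb 2 (4 * N) := by
    exact_mod_cast natLog_two_add_one_le_logb_four_mul (by omega)
  calc _ ≤ ∫ ω, K * dyadicSquareFunction (fun j => c j * X j ω) N K ∂P :=
        integral_mono_of_nonneg (ae_of_all _ hmax_nonneg)
          ((integrable_dyadicSquareFunction hXae horth c K).const_mul _) (ae_of_all _ hmax)
    _ ≤ K * (K * ∑ n ∈ Icc 1 N, c n ^ 2) := by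
        rw [integral_const_mul]
        gcongr
        exact integral_dyadicSquareFunction_le hXae horth c K
    _ ≤ _ := by
        rw [← mul_assoc, ← sq]
        gcongr

theorem stmt5 {Ω : Type*} [MeasurableSpace Ω] (P : Measure Ω) [IsProbabilityMeasure P]
    (N : ℕ) (hN : 1 ≤ N) (X : ℕ → Ω → ℝ) (hmeas : ∀ i, Measurable (X i))
    (horth : ∀ i ∈ Finset.Icc 1 N, ∀ j ∈ Finset.Icc 1 N,
      ∫ ω, X i ω * X j ω ∂P = if i = j then 1 else 0)
    (c : ℕ → ℝ) :
    ∫ ω, (Finset.Icc 1 N).sup' (Finset.nonempty_Icc.2 hN)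
        (fun n => (∑ j ∈ Finset.Icc 1 n, c j * X j ω) ^ 2) ∂P
      ≤ (Real.logb 2 (4 * N)) ^ 2 * ∑ n ∈ Finset.Icc 1 N, (c n) ^ 2 :=
  stmt5_general P N hN X hmeas horth c
end

section
/- Let α be irrational with continued fraction convergents p_n/q_n. Define Δ₀^{(n)} = [0, {q_n α}) if n is even and [{q_n α}, 1) if n is odd, and Δ_j^{(n)} = Δ₀^{(n)} + jα (mod 1). Then for every n ≥ 1, the intervals Δ_j^{(n)} for 0 ≤ j < q_{n+1} together with Δ_j^{(n+1)} for 0 ≤ j < q_n are pairwise disjoint and their union is the whole circle 𝕋 = ℝ/ℤ. -/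
open scoped Pointwise

/-- The fundamental interval `Δ₀⁽ⁿ⁾` of the Sinai partition, as a subset of the circle. -/
noncomputable def sinaiBase (α : ℝ) (q : ℕ → ℕ) (n : ℕ) : Set UnitAddCircle :=
  (fun x : ℝ => (x : UnitAddCircle)) ''
    (if Even n then Set.Ico (0 : ℝ) (Int.fract (q n * α)) else Set.Ico (Int.fract (q n * α)) 1)

/-- The translated interval `Δⱼ⁽ⁿ⁾ = Δ₀⁽ⁿ⁾ + jα`. -/
noncomputable def sinaiInterval (α : ℝ) (q : ℕ → ℕ) (n j : ℕ) : Set UnitAddCircle :=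
  (fun x : UnitAddCircle => x + j • ((α : ℝ) : UnitAddCircle)) '' sinaiBase α q n

/-!
Write `β_n = |q_n α - p_n|`. On the circle, `Δ₀⁽ⁿ⁾` is the arc `[0, β_n)` for even `n` and
`[-β_n, 0)` for odd `n`, and `q_n α ≡ (-1)ⁿ β_n`. The recurrences `q_{n+2} = a q_{n+1} + q_n` and
`β_n = a β_{n+1} + β_{n+2}` cut `Δ₀⁽ⁿ⁾` into `Δ₀⁽ⁿ⁺²⁾` and the `a` arcs `Δ⁽ⁿ⁺¹⁾_{q_n + i q_{n+1}}`,
`i < a`. Translating by `jα`, every floor of the tower over `Δ₀⁽ⁿ⁾` splits in the same way, so the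
partition by the towers over `Δ₀⁽ⁿ⁾` and `Δ₀⁽ⁿ⁺¹⁾` refines to the one at level `n + 1`. The
induction starts at level `-1`, where `q₋₁ = 0`, `β₋₁ = 1` and the single arc `[-1, 0)` is the
whole circle.
-/

open Set

section Towers

variable {G : Type*} [AddGroup G] (t : G)

def towerFloor (S : Set G) (j : ℕ) : Set G := (· + j • t) '' S

theorem towerFloor_towerFloor (S : Set G) (j k : ℕ) :
    towerFloor t (towerFloor t S k) j = towerFloor t S (j + k) := by
  simp only [towerFloor, image_image, add_assoc, ← add_nsmul, add_comm k j]

structure IsTwoTowerPartition (X : Set G) (b : ℕ) (Y : Set G) (a : ℕ) : Prop where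
  disjoint_left : ∀ j < b, ∀ j' < b, j ≠ j' → Disjoint (towerFloor t X j) (towerFloor t X j')
  disjoint_right : ∀ j < a, ∀ j' < a, j ≠ j' → Disjoint (towerFloor t Y j) (towerFloor t Y j')
  disjoint_left_right : ∀ j < b, ∀ j' < a, Disjoint (towerFloor t X j) (towerFloor t Y j')
  union_eq_univ :
    (⋃ j ∈ Finset.range b, towerFloor t X j) ∪ (⋃ j ∈ Finset.range a, towerFloor t Y j) = univ

theorem IsTwoTowerPartition.univ_one (Y : Set G) : IsTwoTowerPartition t univ 1 Y 0 where
  disjoint_left j hj j' hj' hne := by omega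
  disjoint_right j hj := absurd hj (Nat.not_lt_zero j)
  disjoint_left_right j _ j' hj' := absurd hj' (Nat.not_lt_zero j')
  union_eq_univ := by simp [towerFloor]

end Towers

section Split

variable {γ δ : Type*}

structure IsSplit (X Z : Set γ) (P : ℕ → Set γ) (c : ℕ) : Prop where
  eq_union : X = Z ∪ ⋃ i ∈ Finset.range c, P i
  disjoint_left : ∀ i < c, Disjoint Z (P i)
  disjoint_pieces : ∀ i < c, ∀ i' < c, i ≠ i' → Disjoint (P i) (P i')

namespace IsSplit

variable {X Z : Set γ} {P : ℕ → Set γ} {c : ℕ}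

theorem left_subset (h : IsSplit X Z P c) : Z ⊆ X :=
  h.eq_union ▸ subset_union_left

theorem piece_subset (h : IsSplit X Z P c) {i : ℕ} (hi : i < c) : P i ⊆ X :=
  h.eq_union ▸ (subset_biUnion_of_mem (u := P) (Finset.mem_coe.2 (Finset.mem_range.2 hi))).trans
    subset_union_right

theorem image {f : γ → δ} (h : IsSplit X Z P c) (hf : InjOn f X) :
    IsSplit (f '' X) (f '' Z) (fun i => f '' P i) c where
  eq_union := by rw [h.eq_union, image_union, image_iUnion₂]
  disjoint_left i hi := by
    rw [disjoint_iff_inter_eq_empty, ← hf.image_inter h.left_subset (h.piece_subset hi),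
      (h.disjoint_left i hi).inter_eq, image_empty]
  disjoint_pieces i hi i' hi' hii' := by
    rw [disjoint_iff_inter_eq_empty, ← hf.image_inter (h.piece_subset hi) (h.piece_subset hi'),
      (h.disjoint_pieces i hi i' hi' hii').inter_eq, image_empty]

end IsSplit

end Split

theorem Nat.lt_or_exists_eq_add_add_mul_of_lt_mul_add {a b c j : ℕ} (hj : j < c * b + a) :
    j < a ∨ ∃ r < b, ∃ i < c, j = r + (a + i * b) := by
  by_cases hja : j < a
  · exact Or.inl hja
  · have hb : 0 < b := Nat.pos_of_ne_zero fun hb => by simp [hb] at hj; omega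
    refine Or.inr ⟨(j - a) % b, Nat.mod_lt _ hb, (j - a) / b,
      Nat.div_lt_of_lt_mul (by rw [Nat.mul_comm]; omega), ?_⟩
    have := Nat.mod_add_div' (j - a) b
    omega

theorem Nat.add_add_mul_lt_mul_add {a b c r i : ℕ} (hr : r < b) (hi : i < c) :
    r + (a + i * b) < c * b + a := by
  nlinarith

namespace IsTwoTowerPartition

variable {G : Type*} [AddGroup G] {t : G} {X Y Z : Set G} {a b c : ℕ}

theorem isSplit_towerFloor (hs : IsSplit X Z (fun i => towerFloor t Y (a + i * b)) c) (r : ℕ) :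
    IsSplit (towerFloor t X r) (towerFloor t Z r)
      (fun i => towerFloor t Y (r + (a + i * b))) c := by
  simp only [← towerFloor_towerFloor t Y r]
  exact hs.image (add_left_injective (r • t)).injOn

variable (h : IsTwoTowerPartition t X b Y a)
  (hs : IsSplit X Z (fun i => towerFloor t Y (a + i * b)) c)
include h hs

theorem step_disjoint_left :
    ∀ j < c * b + a, ∀ j' < c * b + a, j ≠ j' →
      Disjoint (towerFloor t Y j) (towerFloor t Y j') := by
  intro j hj j' hj' hne
  have hsub {r i} (hi : i < c) :=
    (isSplit_towerFloor hs r).piece_subset (i := i) hi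
  rcases Nat.lt_or_exists_eq_add_add_mul_of_lt_mul_add hj with hj | ⟨r, hr, i, hi, rfl⟩ <;>
    rcases Nat.lt_or_exists_eq_add_add_mul_of_lt_mul_add hj' with hj' | ⟨r', hr', i', hi', rfl⟩
  · exact h.disjoint_right j hj j' hj' hne
  · exact (h.disjoint_left_right r' hr' j hj).symm.mono_right (hsub hi')
  · exact (h.disjoint_left_right r hr j' hj').mono_left (hsub hi)
  · obtain rfl | hrr := eq_or_ne r r'
    · exact (isSplit_towerFloor hs r).disjoint_pieces i hi i' hi' (by rintro rfl; exact hne rfl)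
    · exact (h.disjoint_left r hr r' hr' hrr).mono (hsub hi) (hsub hi')

theorem step_disjoint_left_right :
    ∀ j < c * b + a, ∀ j' < b, Disjoint (towerFloor t Y j) (towerFloor t Z j') := by
  intro j hj j' hj'
  have hZ := (isSplit_towerFloor hs j').left_subset
  rcases Nat.lt_or_exists_eq_add_add_mul_of_lt_mul_add hj with hj | ⟨r, hr, i, hi, rfl⟩
  · exact (h.disjoint_left_right j' hj' j hj).symm.mono_right hZ
  · obtain rfl | hrr := eq_or_ne r j'
    · exact ((isSplit_towerFloor hs r).disjoint_left i hi).symm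
    · exact (h.disjoint_left r hr j' hj' hrr).mono ((isSplit_towerFloor hs r).piece_subset hi) hZ

theorem step_union_eq_univ :
    (⋃ j ∈ Finset.range (c * b + a), towerFloor t Y j) ∪
      (⋃ j ∈ Finset.range b, towerFloor t Z j) = univ := by
  refine eq_univ_of_univ_subset (h.union_eq_univ ▸ union_subset ?_ ?_)
  · refine iUnion₂_subset fun r hr => ?_
    rw [(isSplit_towerFloor hs r).eq_union]
    refine union_subset (subset_union_of_subset_right (subset_biUnion_of_mem hr) _)
      (iUnion₂_subset fun i hi => subset_union_of_subset_left (subset_biUnion_of_mem ?_) _)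
    simp only [Finset.mem_coe, Finset.mem_range] at hr hi ⊢
    exact Nat.add_add_mul_lt_mul_add hr hi
  · refine iUnion₂_subset fun j hj => subset_union_of_subset_left (subset_biUnion_of_mem ?_) _
    simp only [Finset.mem_coe, Finset.mem_range] at hj ⊢
    omega

theorem step : IsTwoTowerPartition t Y (c * b + a) Z b where
  disjoint_left := h.step_disjoint_left hs
  disjoint_right j hj j' hj' hne := (h.disjoint_left j hj j' hj' hne).mono
    (isSplit_towerFloor hs j).left_subset (isSplit_towerFloor hs j').left_subset
  disjoint_left_right := h.step_disjoint_left_right hs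
  union_eq_univ := h.step_union_eq_univ hs

end IsTwoTowerPartition

theorem Monotone.biUnion_range_Ico_succ {α : Type*} [LinearOrder α] {f : ℕ → α}
    (hf : Monotone f) (c : ℕ) :
    ⋃ i ∈ Finset.range c, Ico (f i) (f (i + 1)) = Ico (f 0) (f c) :=
  Subset.antisymm (iUnion₂_subset fun i hi => Ico_subset_Ico (hf (Nat.zero_le i))
    (hf (Nat.add_one_le_of_lt (Finset.mem_range.1 hi)))) (Ico_subset_biUnion_Ico c f)

theorem Antitone.biUnion_range_Ico_succ {α : Type*} [LinearOrder α] {f : ℕ → α}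
    (hf : Antitone f) (c : ℕ) :
    ⋃ i ∈ Finset.range c, Ico (f (i + 1)) (f i) = Ico (f c) (f 0) := by
  induction c with
  | zero => simp
  | succ c ih =>
    rw [Finset.range_add_one, Finset.set_biUnion_insert, ih,
      Ico_union_Ico_eq_Ico (hf (Nat.le_add_right c 1)) (hf (Nat.zero_le c))]

theorem isSplit_Ico_of_monotone {f : ℕ → ℝ} (hf : Monotone f) {c : ℕ} {u : ℝ} (hu : f c ≤ u) :
    IsSplit (Ico (f 0) u) (Ico (f c) u) (fun i => Ico (f i) (f (i + 1))) c where
  eq_union := by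
    rw [hf.biUnion_range_Ico_succ, union_comm, Ico_union_Ico_eq_Ico (hf (Nat.zero_le c)) hu]
  disjoint_left i hi := Ico_disjoint_Ico_same.symm.mono_left (Ico_subset_Ico_left (hf hi))
  disjoint_pieces i _ i' _ hii' := hf.pairwise_disjoint_on_Ico_succ hii'

theorem isSplit_Ico_of_antitone {f : ℕ → ℝ} (hf : Antitone f) {c : ℕ} {l : ℝ} (hl : l ≤ f c) :
    IsSplit (Ico l (f 0)) (Ico l (f c)) (fun i => Ico (f (i + 1)) (f i)) c where
  eq_union := by
    rw [hf.biUnion_range_Ico_succ, Ico_union_Ico_eq_Ico hl (hf (Nat.zero_le c))]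
  disjoint_left i hi := Ico_disjoint_Ico_same.mono_right (Ico_subset_Ico_left (hf hi))
  disjoint_pieces i _ i' _ hii' := hf.pairwise_disjoint_on_Ico_succ hii'

namespace UnitAddCircle

theorem injOn_coe_Ico (a : ℝ) : InjOn ((↑) : ℝ → UnitAddCircle) (Ico a (a + 1)) :=
  fun _ hx _ hy h => (AddCircle.coe_eq_coe_iff_of_mem_Ico hx hy).1 h

theorem coe_image_Ico_add_one (x y : ℝ) :
    ((↑) : ℝ → UnitAddCircle) '' Ico (x + 1) (y + 1) = (↑) '' Ico x y := by
  rw [← image_add_const_Ico, image_image]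
  simp only [AddCircle.coe_add_period]

theorem towerFloor_coe_image_Ico {t : UnitAddCircle} {j : ℕ} {c : ℝ} (hj : j • t = c) (x y : ℝ) :
    towerFloor t ((↑) '' Ico x y) j = (↑) '' Ico (x + c) (y + c) := by
  rw [towerFloor, hj, image_image, ← image_add_const_Ico, image_image]
  rfl

variable {t : UnitAddCircle} {a b A : ℕ} {βX βY βZ : ℝ}

theorem isTwoTowerPartition_step_Ico_zero (hX : βX ≤ 1) (hY : 0 ≤ βY) (hZ : 0 ≤ βZ)
    (hrec : βX = A * βY + βZ) (ha : a • t = βX) (hb : b • t = (-βY : ℝ))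
    (h : IsTwoTowerPartition t ((↑) '' Ico 0 βX) b ((↑) '' Ico (-βY) 0) a) :
    IsTwoTowerPartition t ((↑) '' Ico (-βY) 0) (A * b + a) ((↑) '' Ico 0 βZ) b := by
  set f : ℕ → ℝ := fun i => βX - i * βY
  have hf : Antitone f := fun i j hij => by simp only [f]; gcongr
  have hfloor (i : ℕ) :
      towerFloor t ((↑) '' Ico (-βY) 0) (a + i * b) = (↑) '' Ico (f (i + 1)) (f i) := by
    have hj : (a + i * b) • t = (f i : ℝ) := by
      rw [add_nsmul, mul_nsmul', ha, hb, ← AddCircle.coe_nsmul, ← AddCircle.coe_add]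
      simp only [f, nsmul_eq_mul]; ring_nf
    rw [towerFloor_coe_image_Ico hj]
    simp only [f]; push_cast; ring_nf
  have hf0 : f 0 = βX := by simp [f]
  have hfA : f A = βZ := by simp only [f]; linarith
  have hsplit := isSplit_Ico_of_antitone hf (hfA ▸ hZ)
  rw [hf0, hfA] at hsplit
  refine h.step ?_
  simp only [hfloor]
  exact hsplit.image ((injOn_coe_Ico 0).mono (Ico_subset_Ico le_rfl (by linarith)))

theorem isTwoTowerPartition_step_Ico_neg (hX : βX ≤ 1) (hY : 0 ≤ βY) (hZ : 0 ≤ βZ)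
    (hrec : βX = A * βY + βZ) (ha : a • t = (-βX : ℝ)) (hb : b • t = βY)
    (h : IsTwoTowerPartition t ((↑) '' Ico (-βX) 0) b ((↑) '' Ico 0 βY) a) :
    IsTwoTowerPartition t ((↑) '' Ico 0 βY) (A * b + a) ((↑) '' Ico (-βZ) 0) b := by
  set f : ℕ → ℝ := fun i => -βX + i * βY
  have hf : Monotone f := fun i j hij => by simp only [f]; gcongr
  have hfloor (i : ℕ) :
      towerFloor t ((↑) '' Ico 0 βY) (a + i * b) = (↑) '' Ico (f i) (f (i + 1)) := by
    have hj : (a + i * b) • t = (f i : ℝ) := by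
      rw [add_nsmul, mul_nsmul', ha, hb, ← AddCircle.coe_nsmul, ← AddCircle.coe_add]
      simp only [f, nsmul_eq_mul]
    rw [towerFloor_coe_image_Ico hj]
    simp only [f]; push_cast; ring_nf
  have hf0 : f 0 = -βX := by simp [f]
  have hfA : f A = -βZ := by simp only [f]; linarith
  have hsplit := isSplit_Ico_of_monotone hf (hfA ▸ neg_nonpos.2 hZ)
  rw [hf0, hfA] at hsplit
  refine h.step ?_
  simp only [hfloor]
  exact hsplit.image ((injOn_coe_Ico (-1)).mono (Ico_subset_Ico (by linarith) (by norm_num)))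

end UnitAddCircle

-- `|q_n α - p_n|`: the sign of `q_n α - p_n` is `(-1) ^ n`.
noncomputable def convError (α : ℝ) (n : ℕ) : ℝ :=
  (-1) ^ n * ((GenContFract.of α).dens n * α - (GenContFract.of α).nums n)

namespace Irrational

open GenContFract

variable {α : ℝ} (hα : Irrational α)
include hα

theorem genContFract_not_terminatedAt (n : ℕ) : ¬(GenContFract.of α).TerminatedAt n := fun h =>
  hα.ne_rat _ ((terminates_iff_rat α).1 ⟨n, h⟩).choose_spec

theorem stream_succ_ne_none (n : ℕ) : IntFractPair.stream α (n + 1) ≠ none :=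
  (of_terminatedAt_n_iff_succ_nth_intFractPair_stream_eq_none.not).1
    (hα.genContFract_not_terminatedAt n)

theorem exists_nat_s_get?_eq (n : ℕ) :
    ∃ a : ℕ, (GenContFract.of α).s.get? n = some ⟨1, (a : ℝ)⟩ := by
  obtain ⟨ifp, hifp⟩ := Option.ne_none_iff_exists'.1 (hα.stream_succ_ne_none n)
  lift ifp.b to ℕ using (by linarith [IntFractPair.one_le_succ_nth_stream_b hifp]) with a ha
  exact ⟨a, by rw [get?_of_eq_some_of_succ_get?_intFractPair_stream hifp, ← ha]; rfl⟩

theorem exists_nat_conts_recurrence (n : ℕ) : ∃ a : ℕ,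
    (GenContFract.of α).dens (n + 2) =
        a * (GenContFract.of α).dens (n + 1) + (GenContFract.of α).dens n ∧
      (GenContFract.of α).nums (n + 2) =
        a * (GenContFract.of α).nums (n + 1) + (GenContFract.of α).nums n := by
  obtain ⟨a, ha⟩ := hα.exists_nat_s_get?_eq (n + 1)
  exact ⟨a, by simpa using dens_recurrence ha rfl rfl, by simpa using nums_recurrence ha rfl rfl⟩

theorem exists_int_nums (n : ℕ) : ∃ z : ℤ, (GenContFract.of α).nums n = z := by
  induction n using Nat.twoStepInduction with
  | zero => exact ⟨⌊α⌋, by rw [zeroth_num_eq_h, of_h_eq_floor]⟩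
  | one =>
    obtain ⟨a, ha⟩ := hα.exists_nat_s_get?_eq 0
    exact ⟨a * ⌊α⌋ + 1, by rw [first_num_eq ha, of_h_eq_floor]; push_cast; ring⟩
  | more n ih0 ih1 =>
    obtain ⟨z0, hz0⟩ := ih0
    obtain ⟨z1, hz1⟩ := ih1
    obtain ⟨a, -, ha⟩ := hα.exists_nat_conts_recurrence n
    exact ⟨a * z1 + z0, by rw [ha, hz0, hz1]; push_cast; ring⟩

theorem stream_ne_none (n : ℕ) : IntFractPair.stream α n ≠ none := by
  cases n with
  | zero => simp [IntFractPair.stream_zero]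
  | succ n => exact hα.stream_succ_ne_none n

theorem one_le_dens (n : ℕ) : 1 ≤ (GenContFract.of α).dens n := by
  have h := succ_nth_fib_le_of_nth_den (v := α) (n := n)
    (n.eq_zero_or_pos.imp_right fun _ => hα.genContFract_not_terminatedAt _)
  exact le_trans (by exact_mod_cast Nat.fib_pos.2 n.succ_pos) h

theorem convError_eq_inv {ifp : IntFractPair ℝ} {n : ℕ}
    (hifp : IntFractPair.stream α n = some ifp) (hfr : ifp.fr ≠ 0) :
    convError α n =
      (ifp.fr⁻¹ * (GenContFract.of α).dens n + ((GenContFract.of α).contsAux n).b)⁻¹ := by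
  have h := sub_convs_eq hifp
  simp only [if_neg hfr, ← nth_cont_eq_succ_nth_contAux, ← den_eq_conts_b,
    conv_eq_num_div_den] at h
  have hd := hα.one_le_dens n
  rw [convError, show (GenContFract.of α).dens n * α - (GenContFract.of α).nums n =
    (GenContFract.of α).dens n * (α - (GenContFract.of α).nums n / (GenContFract.of α).dens n)
    by field_simp, h]
  field_simp
  rw [← pow_mul, mul_comm, pow_mul, neg_one_sq, one_pow]

theorem convError_mem_Ioo (n : ℕ) : convError α n ∈ Ioo 0 1 := by
  obtain ⟨ifp, hifp⟩ := Option.ne_none_iff_exists'.1 (hα.stream_ne_none n)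
  have hfr : ifp.fr ≠ 0 := fun h =>
    hα.stream_succ_ne_none n (IntFractPair.stream_eq_none_of_fr_eq_zero hifp h)
  have hfr1 : 1 < ifp.fr⁻¹ := (one_lt_inv₀ ((IntFractPair.nth_stream_fr_nonneg hifp).lt_of_ne'
    hfr)).2 (IntFractPair.nth_stream_fr_lt_one hifp)
  have hden : 1 < ifp.fr⁻¹ * (GenContFract.of α).dens n + ((GenContFract.of α).contsAux n).b := by
    nlinarith [hα.one_le_dens n, zero_le_of_contsAux_b (v := α) (n := n)]
  rw [hα.convError_eq_inv hifp hfr]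
  exact ⟨inv_pos.2 (by linarith), inv_lt_one_of_one_lt₀ hden⟩

theorem exists_nat_convError_recurrence (n : ℕ) : ∃ a : ℕ,
    (GenContFract.of α).dens (n + 2) = a * (GenContFract.of α).dens (n + 1) +
      (GenContFract.of α).dens n ∧
    convError α n = a * convError α (n + 1) + convError α (n + 2) := by
  obtain ⟨a, hd, hn⟩ := hα.exists_nat_conts_recurrence n
  refine ⟨a, hd, ?_⟩
  simp only [convError, pow_succ, hd, hn]
  ring

theorem dens_one_mul_convError_zero_add_convError_one :
    (GenContFract.of α).dens 1 * convError α 0 + convError α 1 = 1 := by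
  obtain ⟨a, ha⟩ := hα.exists_nat_s_get?_eq 0
  simp only [convError, first_den_eq ha, first_num_eq ha, zeroth_den_eq_one, zeroth_num_eq_h]
  ring

theorem fract_dens_mul (n : ℕ) : Int.fract ((GenContFract.of α).dens n * α) =
    if Even n then convError α n else 1 - convError α n := by
  obtain ⟨z, hz⟩ := hα.exists_int_nums n
  obtain ⟨h0, h1⟩ := hα.convError_mem_Ioo n
  rw [Int.fract_eq_iff]
  split_ifs with hn
  · refine ⟨h0.le, h1, z, ?_⟩
    simp only [convError, hn.neg_one_pow, hz]
    ring
  · refine ⟨by linarith, by linarith, z - 1, ?_⟩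
    simp only [convError, (Nat.not_even_iff_odd.1 hn).neg_one_pow, hz]
    push_cast
    ring

end Irrational

section Sinai

variable {α : ℝ} {q : ℕ → ℕ} {β : ℕ → ℝ}
  (hfract : ∀ n, Int.fract (q n * α) = if Even n then β n else 1 - β n)
include hfract

theorem sinaiBase_of_even {n : ℕ} (hn : Even n) : sinaiBase α q n = (↑) '' Ico 0 (β n) := by
  rw [sinaiBase, if_pos hn, hfract, if_pos hn]

theorem sinaiBase_of_odd {n : ℕ} (hn : ¬Even n) : sinaiBase α q n = (↑) '' Ico (-β n) 0 := by
  rw [sinaiBase, if_neg hn, hfract, if_neg hn, ← UnitAddCircle.coe_image_Ico_add_one (-β n),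
    zero_add, neg_add_eq_sub]

theorem nsmul_coe_of_even {n : ℕ} (hn : Even n) : q n • (α : UnitAddCircle) = (β n : ℝ) := by
  rw [← AddCircle.coe_nsmul, nsmul_eq_mul, ← AddCircle.coe_fract, hfract, if_pos hn]

theorem nsmul_coe_of_odd {n : ℕ} (hn : ¬Even n) : q n • (α : UnitAddCircle) = (-β n : ℝ) := by
  rw [← AddCircle.coe_nsmul, nsmul_eq_mul, ← AddCircle.coe_fract, hfract, if_neg hn,
    sub_eq_neg_add, AddCircle.coe_add_period]

theorem mem_Icc_of_fract_eq (n : ℕ) : β n ∈ Icc 0 1 := by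
  have h0 := Int.fract_nonneg (q n * α)
  have h1 := Int.fract_lt_one (q n * α)
  rw [hfract] at h0 h1
  split_ifs at h0 h1 <;> constructor <;> linarith

theorem isTwoTowerPartition_sinaiBase (hq0 : q 0 = 1) (hβ01 : q 1 * β 0 + β 1 = 1)
    (hrec : ∀ n, ∃ A : ℕ, q (n + 2) = A * q (n + 1) + q n ∧ β n = A * β (n + 1) + β (n + 2))
    (n : ℕ) :
    IsTwoTowerPartition (α : UnitAddCircle) (sinaiBase α q n) (q (n + 1))
      (sinaiBase α q (n + 1)) (q n) := by
  have hβ := mem_Icc_of_fract_eq hfract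
  induction n with
  | zero =>
    -- level `-1`: one tower of height `q₋₁ + 0 = 1` over `[-1, 0)`, with `β₋₁ = 1`
    have huniv : ((↑) : ℝ → UnitAddCircle) '' Ico (-1) 0 = univ := by
      simpa using AddCircle.coe_image_Ico_eq (1 : ℝ) (-1)
    have h := UnitAddCircle.isTwoTowerPartition_step_Ico_neg (t := α) (a := 0) (b := 1)
      (A := q 1) le_rfl (hβ 0).1 (hβ 1).1 (by linarith) (by simp)
      (by simpa [hq0] using nsmul_coe_of_even hfract Even.zero)
      (huniv ▸ IsTwoTowerPartition.univ_one _ _)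
    rw [sinaiBase_of_even hfract Even.zero, sinaiBase_of_odd hfract (by decide), hq0]
    simpa using h
  | succ n ih =>
    obtain ⟨A, hqA, hβA⟩ := hrec n
    rw [hqA]
    by_cases hn : Even n
    · have hn1 : ¬Even (n + 1) := Nat.even_add_one.not.2 (not_not.2 hn)
      have hn2 : Even (n + 1 + 1) := Nat.even_add_one.2 hn1
      rw [sinaiBase_of_even hfract hn, sinaiBase_of_odd hfract hn1] at ih
      rw [sinaiBase_of_odd hfract hn1, sinaiBase_of_even hfract hn2]
      exact UnitAddCircle.isTwoTowerPartition_step_Ico_zero (hβ n).2 (hβ (n + 1)).1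
        (hβ (n + 2)).1 hβA (nsmul_coe_of_even hfract hn) (nsmul_coe_of_odd hfract hn1) ih
    · have hn1 : Even (n + 1) := Nat.even_add_one.2 hn
      have hn2 : ¬Even (n + 1 + 1) := Nat.even_add_one.not.2 (not_not.2 hn1)
      rw [sinaiBase_of_odd hfract hn, sinaiBase_of_even hfract hn1] at ih
      rw [sinaiBase_of_even hfract hn1, sinaiBase_of_odd hfract hn2]
      exact UnitAddCircle.isTwoTowerPartition_step_Ico_neg (hβ n).2 (hβ (n + 1)).1
        (hβ (n + 2)).1 hβA (nsmul_coe_of_odd hfract hn) (nsmul_coe_of_even hfract hn1) ih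

end Sinai

theorem stmt11_general (α : ℝ) (hα : Irrational α) (q : ℕ → ℕ)
    (hq : ∀ n, (q n : ℝ) = (GenContFract.of α).dens n)
    (n : ℕ) :
    (∀ j < q (n + 1), ∀ j' < q (n + 1), j ≠ j' →
        Disjoint (sinaiInterval α q n j) (sinaiInterval α q n j')) ∧
    (∀ j < q n, ∀ j' < q n, j ≠ j' →
        Disjoint (sinaiInterval α q (n + 1) j) (sinaiInterval α q (n + 1) j')) ∧
    (∀ j < q (n + 1), ∀ j' < q n,
        Disjoint (sinaiInterval α q n j) (sinaiInterval α q (n + 1) j')) ∧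
    ((⋃ j ∈ Finset.range (q (n + 1)), sinaiInterval α q n j) ∪
        (⋃ j ∈ Finset.range (q n), sinaiInterval α q (n + 1) j) = Set.univ) := by
  have hfract (m : ℕ) :
      Int.fract (q m * α) = if Even m then convError α m else 1 - convError α m := by
    rw [hq]
    exact hα.fract_dens_mul m
  have hq0 : q 0 = 1 := by exact_mod_cast (hq 0).trans GenContFract.zeroth_den_eq_one
  have hβ01 : (q 1 : ℝ) * convError α 0 + convError α 1 = 1 := by
    rw [hq]
    exact hα.dens_one_mul_convError_zero_add_convError_one
  have hrec (m : ℕ) : ∃ A : ℕ, q (m + 2) = A * q (m + 1) + q m ∧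
      convError α m = A * convError α (m + 1) + convError α (m + 2) := by
    obtain ⟨A, hd, hβ⟩ := hα.exists_nat_convError_recurrence m
    refine ⟨A, ?_, hβ⟩
    rw [← hq, ← hq, ← hq] at hd
    exact_mod_cast hd
  have h := isTwoTowerPartition_sinaiBase hfract hq0 hβ01 hrec n
  exact ⟨h.disjoint_left, h.disjoint_right, h.disjoint_left_right, h.union_eq_univ⟩

theorem stmt11 (α : ℝ) (hα : Irrational α) (q : ℕ → ℕ)
    (hq : ∀ n, (q n : ℝ) = (GenContFract.of α).dens n)
    (n : ℕ) (hn : 1 ≤ n) :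
    (∀ j < q (n + 1), ∀ j' < q (n + 1), j ≠ j' →
        Disjoint (sinaiInterval α q n j) (sinaiInterval α q n j')) ∧
    (∀ j < q n, ∀ j' < q n, j ≠ j' →
        Disjoint (sinaiInterval α q (n + 1) j) (sinaiInterval α q (n + 1) j')) ∧
    (∀ j < q (n + 1), ∀ j' < q n,
        Disjoint (sinaiInterval α q n j) (sinaiInterval α q (n + 1) j')) ∧
    ((⋃ j ∈ Finset.range (q (n + 1)), sinaiInterval α q n j) ∪
        (⋃ j ∈ Finset.range (q n), sinaiInterval α q (n + 1) j) = Set.univ) :=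
  stmt11_general α hα q hq n
end

section
/- For every a ∈ (0,1), the function f(x) = −2a·sin(2πx)/(1 − 2a·cos(2πx) + a²) on 𝕋 is a C² function with zero mean whose Fourier coefficients are f̂(0)=0, f̂(n) = i a^n for n > 0, and f̂(n) = −i a^{−n} for n < 0, and for every irrational α the one-sided ergodic Hilbert transform at 0 is bounded: sup_N |∑_{n=1}^N f(nα)/n| < +∞. -/
/-!
With `z = a e^{2πix}` the function equals `i (z / (1 - z) - z̄ / (1 - z̄))`, i.e. the absolutely
convergent series `-2 ∑_{m ≥ 1} a^m sin 2πmx`, whose Fourier coefficients are read off by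
termwise integration. Inserting the series into the ergodic sums gives
`∑_{n ≤ N} f(nα)/n = -2 ∑_m a^m ∑_{n ≤ N} sin(2πmnα)/n`, and the inner sums `∑_{n ≤ N} sin(nt)/n`
are bounded by `3` uniformly in `N` and `t`: for `n ≤ 1/|sin(t/2)|` use
`|sin nt| ≤ 2n |sin(t/2)|`, for larger `n` use Abel summation against the Dirichlet-kernel bound
`|∑_{M ≤ n < K} sin nt| ≤ 1/|sin(t/2)|`.
-/

open Real Finset

theorem abs_sin_nat_mul_le (n : ℕ) (x : ℝ) : |sin (n * x)| ≤ n * |sin x| := by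
  induction n with
  | zero => simp
  | succ n ih =>
    calc |sin ((n + 1 : ℕ) * x)| = |sin (n * x) * cos x + cos (n * x) * sin x| := by
          push_cast; rw [add_mul, one_mul, sin_add]
      _ ≤ |sin (n * x)| * |cos x| + |cos (n * x)| * |sin x| := by
          simpa only [abs_mul] using abs_add_le (sin (n * x) * cos x) (cos (n * x) * sin x)
      _ ≤ n * |sin x| * 1 + 1 * |sin x| := by
          gcongr
          · exact abs_cos_le_one x
          · exact abs_cos_le_one _
      _ = (n + 1 : ℕ) * |sin x| := by push_cast; ring

theorem two_mul_sin_half_mul_sum_Ico_sin (s : ℝ) {M N : ℕ} (h : M ≤ N) :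
    2 * sin (s / 2) * ∑ n ∈ Ico M N, sin (n * s) =
      cos ((M - 1 / 2) * s) - cos ((N - 1 / 2) * s) := by
  have := sum_Ico_sub (fun n : ℕ => -cos ((n - 1 / 2) * s)) h
  rw [mul_sum, ← neg_sub_neg, ← this]
  refine sum_congr rfl fun n _ => ?_
  rw [mul_comm, ← mul_assoc, mul_comm _ 2, two_mul_sin_mul_sin]
  push_cast
  ring_nf

theorem abs_sin_half_mul_abs_sum_Ico_sin_le (s : ℝ) (M N : ℕ) :
    |sin (s / 2)| * |∑ n ∈ Ico M N, sin (n * s)| ≤ 1 := by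
  rcases le_or_gt M N with h | h
  · have key := congrArg abs (two_mul_sin_half_mul_sum_Ico_sin s h)
    rw [abs_mul, abs_mul, abs_two] at key
    linarith [abs_sub (cos ((M - 1 / 2) * s)) (cos ((N - 1 / 2) * s)),
      abs_cos_le_one ((M - 1 / 2) * s), abs_cos_le_one ((N - 1 / 2) * s)]
  · simp [Ico_eq_empty_of_le h.le]

section Abel

variable {E : Type*} [SeminormedAddCommGroup E] [NormedSpace ℝ E]

theorem sum_Ico_smul_eq_by_parts (b : ℕ → ℝ) (u : ℕ → E) {M N : ℕ} (h : M ≤ N) :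
    ∑ n ∈ Ico M N, b n • u n = b N • ∑ n ∈ Ico M N, u n +
      ∑ n ∈ Ico M N, (b n - b (n + 1)) • ∑ k ∈ Ico M (n + 1), u k := by
  induction N, h using Nat.le_induction with
  | base => simp
  | succ N h ih =>
    rw [sum_Ico_succ_top h, sum_Ico_succ_top h, sum_Ico_succ_top h, ih, sum_Ico_succ_top h]
    simp only [sub_smul, smul_add]
    abel

theorem norm_sum_Ico_smul_le_of_antitoneOn {b : ℕ → ℝ} {u : ℕ → E} {M : ℕ} {B : ℝ}
    (hb : AntitoneOn b (Set.Ici M)) (hb0 : ∀ n, 0 ≤ b n)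
    (hu : ∀ N, ‖∑ n ∈ Ico M N, u n‖ ≤ B) (N : ℕ) :
    ‖∑ n ∈ Ico M N, b n • u n‖ ≤ b M * B := by
  have hB : 0 ≤ B := by simpa using hu M
  rcases le_or_gt M N with h | h
  · have hmono : ∀ n ∈ Ico M N, b (n + 1) ≤ b n := fun n hn =>
      hb (mem_Ico.1 hn).1 (Set.mem_Ici.2 ((mem_Ico.1 hn).1.trans n.le_succ)) n.le_succ
    rw [sum_Ico_smul_eq_by_parts b u h]
    calc _ ≤ b N * B + ∑ n ∈ Ico M N, (b n - b (n + 1)) * B := by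
          refine norm_add_le_of_le ?_ (norm_sum_le_of_le _ fun n hn => ?_)
          · rw [norm_smul, Real.norm_of_nonneg (hb0 N)]
            exact mul_le_mul_of_nonneg_left (hu N) (hb0 N)
          · rw [norm_smul, Real.norm_of_nonneg (sub_nonneg.2 (hmono n hn))]
            exact mul_le_mul_of_nonneg_left (hu _) (sub_nonneg.2 (hmono n hn))
      _ = b M * B := by
          have htel : ∑ n ∈ Ico M N, (b n - b (n + 1)) = b M - b N := by
            rw [← neg_sub, ← sum_Ico_sub b h, ← sum_neg_distrib]
            simp only [neg_sub]
          rw [← sum_mul, htel]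
          ring
  · simpa [Ico_eq_empty_of_le h.le] using mul_nonneg (hb0 M) hB

end Abel

theorem abs_sum_sin_nat_mul_div_le_card (t : ℝ) (s : Finset ℕ) :
    |∑ n ∈ s, sin (n * t) / n| ≤ 2 * |sin (t / 2)| * #s := by
  calc _ ≤ ∑ n ∈ s, 2 * |sin (t / 2)| := by
        refine abs_sum_le_sum_abs _ _ |>.trans (sum_le_sum fun n _ => ?_)
        rcases n.eq_zero_or_pos with rfl | hn
        · simp
        have hn' : (0 : ℝ) < n := by exact_mod_cast hn
        have := abs_sin_nat_mul_le (2 * n) (t / 2)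
        rw [abs_div, abs_of_pos hn', div_le_iff₀ hn']
        push_cast at this
        rwa [show 2 * (n : ℝ) * (t / 2) = n * t by ring, mul_right_comm] at this
    _ = 2 * |sin (t / 2)| * #s := by rw [sum_const, nsmul_eq_mul, mul_comm]

theorem abs_sum_Icc_sin_nat_mul_div_le (t : ℝ) (N : ℕ) :
    |∑ n ∈ Icc 1 N, sin (n * t) / n| ≤ 3 := by
  rcases (abs_nonneg (sin (t / 2))).eq_or_lt with hσ | hσ
  · have := abs_sum_sin_nat_mul_div_le_card t (Icc 1 N)
    rw [← hσ] at this
    linarith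
  set σ := |sin (t / 2)|
  set M := ⌊σ⁻¹⌋₊
  rw [← sum_filter_add_sum_filter_not _ (· ≤ M)]
  have hhead : |∑ n ∈ (Icc 1 N).filter (· ≤ M), sin (n * t) / n| ≤ 2 := by
    refine (abs_sum_sin_nat_mul_div_le_card t _).trans ?_
    have hcard : (#((Icc 1 N).filter (· ≤ M)) : ℝ) ≤ σ⁻¹ := by
      refine le_trans ?_ (Nat.floor_le (inv_nonneg.2 hσ.le))
      exact_mod_cast (card_le_card fun n => by simp only [mem_filter, mem_Icc]; omega).trans
        (Nat.card_Icc 1 M).le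
    calc 2 * σ * _ ≤ 2 * σ * σ⁻¹ := by gcongr
      _ = 2 := by field_simp
  have htail : |∑ n ∈ (Icc 1 N).filter (¬ · ≤ M), sin (n * t) / n| ≤ 1 := by
    have hset : (Icc 1 N).filter (¬ · ≤ M) = Ico (M + 1) (N + 1) := by
      ext n
      simp only [mem_filter, mem_Icc, mem_Ico]
      omega
    have hanti : AntitoneOn (fun n : ℕ => (n : ℝ)⁻¹) (Set.Ici (M + 1)) := fun m hm n _ hmn =>
      inv_anti₀ (by exact_mod_cast (M.succ_pos.trans_le hm)) (by exact_mod_cast hmn)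
    have hpartial : ∀ K, ‖∑ n ∈ Ico (M + 1) K, sin (n * t)‖ ≤ σ⁻¹ := fun K => by
      rw [Real.norm_eq_abs, ← one_div, le_div_iff₀' hσ]
      exact abs_sin_half_mul_abs_sum_Ico_sin_le t _ _
    have := norm_sum_Ico_smul_le_of_antitoneOn hanti (fun n => inv_nonneg.2 n.cast_nonneg)
      hpartial (N + 1)
    simp only [smul_eq_mul, Real.norm_eq_abs] at this
    rw [hset]
    simp_rw [div_eq_inv_mul]
    refine this.trans ?_
    have : σ⁻¹ < M + 1 := Nat.lt_floor_add_one _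
    rw [inv_mul_le_iff₀ (by positivity), mul_one]
    push_cast
    exact this.le
  linarith [abs_add_le (∑ n ∈ (Icc 1 N).filter (· ≤ M), sin (n * t) / n)
    (∑ n ∈ (Icc 1 N).filter (¬ · ≤ M), sin (n * t) / n)]

theorem abs_sum_Icc_div_le_of_hasSum_sin {f : ℝ → ℝ} {b : ℕ → ℝ} {C : ℝ}
    (hb : HasSum (fun m => |b m|) C)
    (hf : ∀ x, HasSum (fun m => b m * sin (2 * π * m * x)) (f x)) (α : ℝ) (N : ℕ) :
    |∑ n ∈ Icc 1 N, f (n * α) / n| ≤ 3 * C := by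
  have hsum : HasSum (fun m => b m * ∑ n ∈ Icc 1 N, sin (n * (2 * π * m * α)) / n)
      (∑ n ∈ Icc 1 N, f (n * α) / n) := by
    refine (hasSum_sum fun (n : ℕ) _ => (hf (n * α)).div_const (n : ℝ)).congr_fun fun m => ?_
    rw [mul_sum]
    exact sum_congr rfl fun n _ => by ring_nf
  simpa only [Real.norm_eq_abs] using hsum.norm_le_of_bounded (hb.mul_left 3) fun m => by
    rw [Real.norm_eq_abs, abs_mul, mul_comm 3]
    gcongr
    exact abs_sum_Icc_sin_nat_mul_div_le _ N

theorem one_sub_two_mul_mul_cos_add_sq_pos {a : ℝ} (ha : |a| < 1) (θ : ℝ) :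
    0 < 1 - 2 * a * cos θ + a ^ 2 := by
  have h1 : a * cos θ ≤ |a| := by
    calc a * cos θ ≤ |a * cos θ| := le_abs_self _
      _ ≤ |a| := by rw [abs_mul]; exact mul_le_of_le_one_right (abs_nonneg a) (abs_cos_le_one θ)
  nlinarith [sq_abs a, abs_nonneg a]

section Fourier

open Complex

theorem integral_exp_two_pi_mul_I_int_mul (k : ℤ) :
    ∫ x in (0 : ℝ)..1, cexp (2 * π * I * k * x) = if k = 0 then 1 else 0 := by
  split_ifs with hk
  · simp [hk]
  have hc : 2 * π * I * k ≠ 0 := by simp [Real.pi_ne_zero, I_ne_zero, hk]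
  rw [integral_exp_mul_complex hc]
  simp only [ofReal_one, mul_one, ofReal_zero, mul_zero, Complex.exp_zero]
  rw [show 2 * π * I * k = k * (2 * π * I) by ring, exp_int_mul_two_pi_mul_I, sub_self, zero_div]

theorem integral_mul_exp_neg_eq_of_hasSum {c : ℤ → ℂ} {f : ℝ → ℂ}
    (hc : Summable fun m => ‖c m‖)
    (hf : ∀ x : ℝ, HasSum (fun m => c m * cexp (2 * π * I * m * x)) (f x)) (n : ℤ) :
    ∫ x in (0 : ℝ)..1, f x * cexp (-2 * π * I * n * x) = c n := by
  have hnorm : ∀ (m : ℤ) (x : ℝ),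
      ‖c m * cexp (2 * π * I * m * x) * cexp (-2 * π * I * n * x)‖ = ‖c m‖ := by
    intro m x
    simp [norm_exp]
  have hterm : ∀ m : ℤ,
      ∫ x in (0 : ℝ)..1, c m * cexp (2 * π * I * m * x) * cexp (-2 * π * I * n * x) =
        if m = n then c n else 0 := by
    intro m
    have : ∀ x : ℝ, c m * cexp (2 * π * I * m * x) * cexp (-2 * π * I * n * x)
        = c m * cexp (2 * π * I * (m - n : ℤ) * x) := by
      intro x; rw [mul_assoc, ← Complex.exp_add]; push_cast; ring_nf
    simp_rw [this, intervalIntegral.integral_const_mul, integral_exp_two_pi_mul_I_int_mul,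
      sub_eq_zero]
    split_ifs with h <;> simp [h]
  have := intervalIntegral.hasSum_integral_of_dominated_convergence (a := 0) (b := 1)
    (μ := MeasureTheory.volume) (fun m _ => ‖c m‖)
    (fun m => by fun_prop) (fun m => .of_forall fun x _ => (hnorm m x).le)
    (.of_forall fun _ _ => hc) intervalIntegrable_const
    (.of_forall fun x _ => (hf x).mul_right (cexp (-2 * π * I * n * x)))
  simp_rw [hterm] at this
  exact this.unique (hasSum_ite_eq n (c n))

def signPowCoeff (a : ℝ) (n : ℤ) : ℂ :=
  if 0 < n then I * (a : ℂ) ^ n.natAbs else if n < 0 then -I * (a : ℂ) ^ n.natAbs else 0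

theorem norm_signPowCoeff_le (a : ℝ) (n : ℤ) : ‖signPowCoeff a n‖ ≤ |a| ^ n.natAbs := by
  unfold signPowCoeff
  split_ifs <;> simp

theorem summable_norm_signPowCoeff {a : ℝ} (ha : |a| < 1) :
    Summable fun n => ‖signPowCoeff a n‖ := by
  have hgeom := summable_geometric_of_lt_one (abs_nonneg a) ha
  refine Summable.of_norm_bounded (g := fun n : ℤ => |a| ^ n.natAbs) ?_ fun n => by
    simpa using norm_signPowCoeff_le a n
  exact .of_nat_of_neg (by simpa using hgeom) (by simpa using hgeom)

theorem I_mul_geom_sub_I_mul_geom_eq {a : ℝ} (θ : ℝ) (hz : 1 - a * cexp (θ * I) ≠ 0)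
    (hw : 1 - a * cexp (-θ * I) ≠ 0) :
    I * (a * cexp (θ * I) / (1 - a * cexp (θ * I))) +
        -I * (a * cexp (-θ * I) / (1 - a * cexp (-θ * I))) =
      ((-2 * a * Real.sin θ / (1 - 2 * a * Real.cos θ + a ^ 2) : ℝ) : ℂ) := by
  have hcos := two_cos θ
  have hsin := two_sin θ
  have hmul : cexp (θ * I) * cexp (-θ * I) = 1 := by
    rw [← Complex.exp_add, neg_mul, add_neg_cancel, Complex.exp_zero]
  push_cast
  set E := cexp (θ * I)
  set E' := cexp (-θ * I)
  have hD : 1 - 2 * a * Complex.cos θ + a ^ 2 = (1 - a * E) * (1 - a * E') := by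
    linear_combination (-a) * hcos - a ^ 2 * hmul
  rw [hD]
  field_simp
  linear_combination a * hsin

theorem hasSum_signPowCoeff_mul_exp {a : ℝ} (ha : |a| < 1) (x : ℝ) :
    HasSum (fun n : ℤ => signPowCoeff a n * cexp (2 * π * I * n * x))
      ((-2 * a * Real.sin (2 * π * x) / (1 - 2 * a * Real.cos (2 * π * x) + a ^ 2) : ℝ) :
        ℂ) := by
  set θ : ℝ := 2 * π * x
  have hnorm : ∀ y : ℝ, ‖(a : ℂ) * cexp (y * I)‖ < 1 := fun y => by
    rwa [norm_mul, norm_exp_ofReal_mul_I, mul_one, norm_real, Real.norm_eq_abs]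
  have hne : ∀ y : ℝ, 1 - a * cexp (y * I) ≠ 0 := fun y h => by
    have := hnorm y
    rw [← sub_eq_zero.1 h, norm_one] at this
    exact lt_irrefl _ this
  have hgeom : ∀ y : ℝ, HasSum (fun n : ℕ => (a * cexp (y * I)) ^ (n + 1))
      (a * cexp (y * I) / (1 - a * cexp (y * I))) := fun y => by
    simpa only [pow_succ', div_eq_mul_inv] using
      (hasSum_geometric_of_norm_lt_one (hnorm y)).mul_left _
  have hpos : ∀ n : ℕ, signPowCoeff a (n + 1) * cexp (2 * π * I * (n + 1 : ℤ) * x) =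
      I * (a * cexp (θ * I)) ^ (n + 1) := by
    intro n
    rw [signPowCoeff, if_pos (by omega), show ((n : ℤ) + 1).natAbs = n + 1 by omega, mul_pow,
      ← Complex.exp_nat_mul]
    simp only [θ]
    push_cast
    ring_nf
  have hneg : ∀ n : ℕ, signPowCoeff a (-(n + 1)) * cexp (2 * π * I * (-(n + 1) : ℤ) * x) =
      -I * (a * cexp (↑(-θ) * I)) ^ (n + 1) := by
    intro n
    rw [signPowCoeff, if_neg (by omega), if_pos (by omega),
      show (-((n : ℤ) + 1)).natAbs = n + 1 by omega, mul_pow, ← Complex.exp_nat_mul]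
    simp only [θ]
    push_cast
    ring_nf
  have hsum := HasSum.of_add_one_of_neg_add_one
    (f := fun n : ℤ => signPowCoeff a n * cexp (2 * π * I * n * x))
    (((hgeom θ).mul_left I).congr_fun hpos) (((hgeom (-θ)).mul_left (-I)).congr_fun hneg)
  have h0 : signPowCoeff a 0 = 0 := rfl
  rw [h0, zero_mul, add_zero, ofReal_neg,
    I_mul_geom_sub_I_mul_geom_eq θ (hne θ) (ofReal_neg θ ▸ hne (-θ))] at hsum
  exact hsum

theorem signPowCoeff_mul_exp_add_neg (a : ℝ) (m : ℕ) (x : ℝ) :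
    signPowCoeff a m * cexp (2 * π * I * m * x) +
      signPowCoeff a (-m : ℤ) * cexp (2 * π * I * (-m : ℤ) * x) =
      ((-2 * a ^ m * Real.sin (2 * π * m * x) : ℝ) : ℂ) := by
  rcases m.eq_zero_or_pos with rfl | hm
  · simp [signPowCoeff]
  have hsin := two_sin (2 * π * m * x)
  rw [signPowCoeff, signPowCoeff, if_pos (by omega), if_neg (by omega), if_pos (by omega),
    Int.natAbs_neg, Int.natAbs_natCast]
  push_cast at hsin ⊢
  ring_nf at hsin ⊢
  linear_combination (a : ℂ) ^ m * hsin

theorem hasSum_neg_two_mul_pow_mul_sin {a : ℝ} (ha : |a| < 1) (x : ℝ) :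
    HasSum (fun m : ℕ => -2 * a ^ m * Real.sin (2 * π * m * x))
      (-2 * a * Real.sin (2 * π * x) / (1 - 2 * a * Real.cos (2 * π * x) + a ^ 2)) := by
  have h := (hasSum_signPowCoeff_mul_exp ha x).nat_add_neg
  rw [signPowCoeff, if_neg (lt_irrefl 0), if_neg (lt_irrefl 0), zero_mul, add_zero] at h
  exact Complex.hasSum_ofReal.1 (h.congr_fun fun m => (signPowCoeff_mul_exp_add_neg a m x).symm)

end Fourier

theorem stmt16 (a : ℝ) (ha0 : 0 < a) (ha1 : a < 1) :
    let F : ℝ → ℝ := fun x => -2 * a * Real.sin (2 * π * x) /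
      (1 - 2 * a * Real.cos (2 * π * x) + a ^ 2)
    ContDiff ℝ 2 F ∧
    (∫ x in (0 : ℝ)..1, F x) = 0 ∧
    (∀ n : ℤ, (∫ x in (0 : ℝ)..1, (F x : ℂ) * Complex.exp (-2 * π * Complex.I * n * x)) =
      if 0 < n then Complex.I * (a : ℂ) ^ n.natAbs
      else if n < 0 then -Complex.I * (a : ℂ) ^ n.natAbs
      else 0) ∧
    ∀ α : ℝ, Irrational α → ∃ K : ℝ, ∀ N : ℕ,
      |∑ n ∈ Finset.Icc 1 N, F (n * α) / n| ≤ K := by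
  intro F
  have ha : |a| < 1 := abs_lt.2 ⟨by linarith, ha1⟩
  have hcoeff : ∀ n : ℤ,
      ∫ x in (0 : ℝ)..1, (F x : ℂ) * Complex.exp (-2 * π * Complex.I * n * x) =
      signPowCoeff a n :=
    integral_mul_exp_neg_eq_of_hasSum (summable_norm_signPowCoeff ha)
      (hasSum_signPowCoeff_mul_exp ha)
  have hb : HasSum (fun m : ℕ => |-2 * a ^ m|) (2 * (1 - |a|)⁻¹) := by
    simpa [abs_mul, abs_pow] using (hasSum_geometric_of_lt_one (abs_nonneg a) ha).mul_left 2
  refine ⟨?_, ?_, hcoeff, fun α _ => ⟨_, abs_sum_Icc_div_le_of_hasSum_sin hb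
    (hasSum_neg_two_mul_pow_mul_sin ha) α⟩⟩
  · have hD x := (one_sub_two_mul_mul_cos_add_sq_pos ha (2 * π * x)).ne'
    fun_prop (disch := exact hD _)
  · simpa [signPowCoeff, intervalIntegral.integral_ofReal] using hcoeff 0
end
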